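/- The maximum loneliness of the six positive integer speeds 5, 6, 11, 17, 23, 28 equals 8/51; that is, ML(5, 6, 11, 17, 23, 28) = 8/51. In particular the Loneliness Spectrum Conjecture fails for n = 6, since 8/51 < 1/6 and there is no positive integer s with 8/51 = s/(6s+1). -/

import Mathlib

/-- `dnn x` is the distance from `x` to the nearest integer:
`dnn x = min_{m : ℤ} |x - m|`. -/
noncomputable def dnn (x : ℝ) : ℝ := ⨅ m : ℤ, |x - m|

/-- The maximum loneliness of speeds `v 0, …, v (n-1)`:
`ML v = sup_{t : ℝ} min_{i} dnn (t * v i)`. -/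
noncomputable def ML {n : ℕ} (v : Fin n → ℝ) : ℝ := ⨆ t : ℝ, ⨅ i, dnn (t * v i)

/-
The value `8/51` is attained at `t = 7/51`: the products `7 v` are `35, 42, 77, 119, 161, 196`,
at distance at least `8` from the multiples of `51`. For the upper bound, integer speeds make
`t ↦ ‖t v‖` even and `1`-periodic, so only `t ∈ [0, 1/2]` matters, and that interval is covered by
25 of the windows `[(m - 8/51)/v, (m + 8/51)/v]` on which `‖t v‖ ≤ 8/51`, each one starting
before the previous one ends.
-/

theorem dnn_le (x : ℝ) (m : ℤ) : dnn x ≤ |x - m| :=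
  ciInf_le ⟨0, by rintro _ ⟨m, rfl⟩; positivity⟩ m

theorem dnn_eq_abs_sub_round (x : ℝ) : dnn x = |x - round x| :=
  le_antisymm (dnn_le x _) (le_ciInf fun m => round_le x m)

theorem dnn_le_half (x : ℝ) : dnn x ≤ 1 / 2 :=
  dnn_eq_abs_sub_round x ▸ abs_sub_round x

theorem dnn_neg (x : ℝ) : dnn (-x) = dnn x := by
  have neg_le : ∀ y, dnn (-y) ≤ dnn y := fun y => by
    calc dnn (-y) ≤ |-y - ((-round y : ℤ) : ℝ)| := dnn_le _ _
      _ = dnn y := by rw [dnn_eq_abs_sub_round, ← abs_neg]; push_cast; ring_nf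
  exact le_antisymm (neg_le x) (by simpa using neg_le (-x))

theorem dnn_add_intCast (x : ℝ) (k : ℤ) : dnn (x + k) = dnn x := by
  rw [dnn_eq_abs_sub_round, dnn_eq_abs_sub_round, round_add_intCast]
  push_cast
  ring_nf

theorem le_dnn_of_mem_Icc {x δ : ℝ} (k : ℤ) (h : x ∈ Set.Icc (k + δ) (k + 1 - δ)) :
    δ ≤ dnn x := by
  refine le_ciInf fun m => ?_
  rcases le_or_gt m k with hm | hm
  · have : (m : ℝ) ≤ k := by exact_mod_cast hm
    exact le_abs.2 (Or.inl (by linarith [h.1]))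
  · have : (k : ℝ) + 1 ≤ m := by exact_mod_cast hm
    exact le_abs.2 (Or.inr (by linarith [h.2]))

theorem le_dnn_intCast_div {a N d : ℤ} (hN : 0 < N) (h₁ : d ≤ a % N) (h₂ : a % N ≤ N - d) :
    (d / N : ℝ) ≤ dnn (a / N) := by
  have hN' : (0 : ℝ) < N := by exact_mod_cast hN
  have ha : (a : ℝ) / N = (a / N : ℤ) + ((a % N : ℤ) : ℝ) / N := by
    have := congrArg (Int.cast : ℤ → ℝ) (Int.mul_ediv_add_emod a N)
    push_cast at this
    field_simp
    linarith
  refine le_dnn_of_mem_Icc (a / N) ⟨?_, ?_⟩ <;> rw [ha]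
  · gcongr
  · rw [add_sub_assoc, add_le_add_iff_left, le_sub_iff_add_le, ← add_div,
      div_le_one hN']
    exact_mod_cast (by linarith : a % N + d ≤ N)

theorem exists_mem_Icc_forall_dnn_mul_eq {n : ℕ} (v : Fin n → ℤ) (t : ℝ) :
    ∃ u ∈ Set.Icc (0 : ℝ) (1 / 2), ∀ i, dnn (t * v i) = dnn (u * v i) := by
  refine ⟨|t - round t|, ⟨abs_nonneg _, abs_sub_round t⟩, fun i => ?_⟩
  have hshift : dnn (t * v i) = dnn ((t - round t) * v i) := by
    rw [← dnn_add_intCast ((t - round t) * v i) (round t * v i)]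
    push_cast
    ring_nf
  rcases abs_choice (t - round t) with h | h <;> rw [hshift, h]
  rw [neg_mul, dnn_neg]

theorem ML_le_of_forall_mem_Icc {n : ℕ} (v : Fin n → ℤ) {δ : ℝ}
    (h : ∀ t ∈ Set.Icc (0 : ℝ) (1 / 2), ∃ i, dnn (t * v i) ≤ δ) :
    ML (fun i => (v i : ℝ)) ≤ δ := by
  refine ciSup_le fun t => ?_
  obtain ⟨u, hu, hdnn⟩ := exists_mem_Icc_forall_dnn_mul_eq v t
  obtain ⟨i, hi⟩ := h u hu
  exact (ciInf_le (Set.finite_range _).bddBelow i).trans ((hdnn i).trans_le hi)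

theorem le_ML {n : ℕ} [NeZero n] (v : Fin n → ℝ) {δ : ℝ} (t : ℝ)
    (h : ∀ i, δ ≤ dnn (t * v i)) : δ ≤ ML v := by
  have hbdd : BddAbove (Set.range fun t : ℝ => ⨅ i, dnn (t * v i)) :=
    ⟨1 / 2, by
      rintro _ ⟨t, rfl⟩
      exact (ciInf_le (Set.finite_range _).bddBelow 0).trans (dnn_le_half _)⟩
  exact (le_ciInf h).trans (le_ciSup hbdd t)

def ChainCoversIcc {α : Type*} [LinearOrder α] : α → α → List (α × α) → Prop
  | _, _, [] => False
  | a, b, I :: L => I.1 ≤ a ∧ (b ≤ I.2 ∨ ChainCoversIcc I.2 b L)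

theorem ChainCoversIcc.exists_mem {α : Type*} [LinearOrder α] :
    ∀ {a b : α} {L : List (α × α)}, ChainCoversIcc a b L →
      ∀ x ∈ Set.Icc a b, ∃ I ∈ L, x ∈ Set.Icc I.1 I.2
  | _, _, [], h, _, _ => h.elim
  | _, _, I :: _, ⟨hI, hrest⟩, x, ⟨hax, hxb⟩ => by
    rcases le_or_gt x I.2 with hx | hx
    · exact ⟨I, List.mem_cons_self, hI.trans hax, hx⟩
    rcases hrest with hb | hrest
    · exact absurd (hxb.trans hb) hx.not_ge
    obtain ⟨J, hJ, hxJ⟩ := hrest.exists_mem x ⟨hx.le, hxb⟩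
    exact ⟨J, List.mem_cons_of_mem _ hJ, hxJ⟩

theorem exists_dnn_mul_le_of_chainCoversIcc {n : ℕ} {v : Fin n → ℤ} (hv : ∀ i, 0 < v i)
    {δ a b t : ℝ} (C : List (Fin n × ℤ))
    (hC : ChainCoversIcc a b (C.map fun p => ((p.2 - δ) / v p.1, (p.2 + δ) / v p.1)))
    (ht : t ∈ Set.Icc a b) : ∃ i, dnn (t * v i) ≤ δ := by
  obtain ⟨_, hI, hlo, hhi⟩ := hC.exists_mem t ht
  obtain ⟨⟨i, m⟩, -, rfl⟩ := List.mem_map.1 hI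
  have hvi : (0 : ℝ) < v i := by exact_mod_cast hv i
  rw [div_le_iff₀ hvi] at hlo
  rw [le_div_iff₀ hvi] at hhi
  exact ⟨i, (dnn_le _ m).trans (abs_le.2 ⟨by linarith, by linarith⟩)⟩

theorem stmt_18 :
    ML ![(5 : ℝ), 6, 11, 17, 23, 28] = 8 / 51 ∧ (8 / 51 : ℝ) < 1 / 6 ∧
      ¬ ∃ s : ℕ, 0 < s ∧ (8 / 51 : ℝ) = (s : ℝ) / (6 * (s : ℝ) + 1) := by
  set v : Fin 6 → ℤ := ![5, 6, 11, 17, 23, 28]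
  have hv : ![(5 : ℝ), 6, 11, 17, 23, 28] = fun i => (v i : ℝ) := by
    ext i; fin_cases i <;> rfl
  refine ⟨le_antisymm ?_ ?_, by norm_num, ?_⟩
  · rw [hv]
    refine ML_le_of_forall_mem_Icc v fun t ht =>
      exists_dnn_mul_le_of_chainCoversIcc (by decide)
        -- pairs (speed index, m), found by greedily extending the covered part of `[0, 1/2]`
        [(0, 0), (5, 1), (4, 1), (3, 1), (5, 2), (2, 1), (5, 3), (3, 2), (4, 3), (5, 4), (1, 1),
          (0, 1), (3, 4), (5, 7), (4, 6), (2, 3), (3, 5), (4, 7), (1, 2), (2, 4), (0, 2), (4, 10),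
          (2, 5), (3, 8), (1, 3)] ?_ ht
    simp [ChainCoversIcc, v]
    norm_num
  · rw [hv]
    refine le_ML _ (7 / 51) fun i => ?_
    have key := le_dnn_intCast_div (a := 7 * v i) (N := 51) (d := 8) (by norm_num)
      (by fin_cases i <;> decide) (by fin_cases i <;> decide)
    convert key using 2 <;> push_cast <;> ring
  · rintro ⟨s, -, h⟩
    rw [div_eq_div_iff (by norm_num) (by positivity)] at h
    have : 3 * s = 8 := by exact_mod_cast (by linarith : (3 : ℝ) * s = 8)
    omega
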